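/- Let G be a finite simple graph with χ(G) = 3, ivs_χ(G) = 3, vs_χ(G) = 2 and 2·χ(G) ≥ Δ(G) + 2. Then Δ(G) = 4, and for every pair of vertices v₁, v₂ ∈ V(G) such that the subgraph induced on V(G) \ {v₁, v₂} has chromatic number 2, both v₁ and v₂ have degree 4 in G. -/

import Mathlib

/-- The chromatic number of `G` as a natural number. -/
noncomputable def chi {V : Type*} [Fintype V] (G : SimpleGraph V) : ℕ :=
  G.chromaticNumber.toNat

/-- The maximum degree of `G` (classical version, no decidability assumptions). -/
noncomputable def maxDeg {V : Type*} [Fintype V] (G : SimpleGraph V) : ℕ :=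
  @SimpleGraph.maxDegree V G _ (Classical.decRel _)

/-- The degree of a vertex `v` of `G` (classical version). -/
noncomputable def deg {V : Type*} [Fintype V] (G : SimpleGraph V) (v : V) : ℕ :=
  @SimpleGraph.degree V G v (@SimpleGraph.neighborSetFintype V G _ (Classical.decRel _) v)

/-- The chromatic vertex stability of `G`: the minimum size of a set `S` of vertices
such that the subgraph induced on the complement of `S` has chromatic number `χ(G) - 1`. -/
noncomputable def vsChi {V : Type*} [Fintype V] [DecidableEq V] (G : SimpleGraph V) : ℕ :=
  sInf {n : ℕ | ∃ S : Finset V, S.card = n ∧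
    chi (G.induce (↑(Sᶜ) : Set V)) = chi G - 1}

/-- The independent chromatic vertex stability of `G`: the minimum size of an independent
set `S` of vertices such that the subgraph induced on the complement of `S` has chromatic
number `χ(G) - 1`. -/
noncomputable def ivsChi {V : Type*} [Fintype V] [DecidableEq V] (G : SimpleGraph V) : ℕ :=
  sInf {n : ℕ | ∃ S : Finset V, S.card = n ∧
    (∀ x ∈ S, ∀ y ∈ S, ¬ G.Adj x y) ∧
    chi (G.induce (↑(Sᶜ) : Set V)) = chi G - 1}

/-!
Let `{a, b}` be a pair with `χ(G - {a, b}) = 2`. Since `ivs_χ(G) = 3`, `a` and `b` are adjacent.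
All 2-colourings are extended greedily: a vertex with fewer than two neighbours among the
already coloured vertices needs no third colour.
Since `vs_χ(G) = 2`, `G - b` is not 2-colourable, so `a` has at least two neighbours besides `b`.
If `deg a ≤ 3` these are exactly two vertices `u, w`. Re-inserting `a` into `G - {a, b, u}` shows
that `G - {u, b}` is 2-colourable, so `u ~ b` by `ivs_χ(G) = 3`; likewise `w ~ b`. Then `b` has at
most one neighbour outside `{a, u, w}` (as `Δ ≤ 4`), so re-inserting `b` and then `a` into
`G - {a, b, u, w}` 2-colours `G - {u, w}`, whence `u ~ w`. But then `{a, b, u, w}` is a `K₄`,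
contradicting `χ(G) = 3`. Finally, a pair realising `vs_χ(G) = 2` yields a vertex of degree 4.
-/

open SimpleGraph

section Colorings

variable {V : Type*} {G : SimpleGraph V}

theorem SimpleGraph.Colorable.induce_mono {s t : Set V} {k : ℕ} (ht : (G.induce t).Colorable k)
    (hst : s ⊆ t) : (G.induce s).Colorable k :=
  ht.of_hom (G.induceHomOfLE hst).toHom

theorem SimpleGraph.Colorable.induce_insert [Finite V] {s : Set V} {v : V} {k : ℕ}
    (hs : (G.induce s).Colorable k) (hv : (G.neighborSet v ∩ s).ncard < k) :
    (G.induce (insert v s)).Colorable k := by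
  classical
  obtain ⟨C⟩ := hs
  obtain ⟨m, rfl⟩ : ∃ m, k = m + 1 := ⟨k - 1, by omega⟩
  let f : V → Fin (m + 1) := fun x => if hx : x ∈ s then C ⟨x, hx⟩ else 0
  have hf : ∀ {x y}, x ∈ s → y ∈ s → G.Adj x y → f x ≠ f y := by
    intro x y hx hy hxy
    simpa only [f, dif_pos hx, dif_pos hy] using
      C.valid (show (G.induce s).Adj ⟨x, hx⟩ ⟨y, hy⟩ from hxy)
  obtain ⟨c, hc⟩ : ∃ c, c ∉ f '' (G.neighborSet v ∩ s) := by
    by_contra! h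
    have := (Set.ncard_image_le (f := f) (s := G.neighborSet v ∩ s)).trans_lt hv
    rw [Set.eq_univ_of_forall h, Set.ncard_univ, Nat.card_eq_fintype_card,
      Fintype.card_fin] at this
    exact this.false
  refine ⟨Coloring.mk (fun x => if x.1 = v then c else f x) ?_⟩
  rintro ⟨x, hx⟩ ⟨y, hy⟩ (hxy : G.Adj x y)
  have hx' := Set.mem_insert_iff.1 hx
  have hy' := Set.mem_insert_iff.1 hy
  dsimp only
  split_ifs with hxv hyv hyv
  · exact absurd (hxv.trans hyv.symm) hxy.ne
  · exact fun h => hc ⟨y, ⟨hxv ▸ hxy, hy'.resolve_left hyv⟩, h.symm⟩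
  · exact fun h => hc ⟨x, ⟨hyv ▸ hxy.symm, hx'.resolve_left hxv⟩, h⟩
  · exact hf (hx'.resolve_left hxv) (hy'.resolve_left hyv) hxy

end Colorings

section Invariants

variable {V : Type*}

theorem chi_le_iff_colorable [Fintype V] (G : SimpleGraph V) (n : ℕ) :
    chi G ≤ n ↔ G.Colorable n := by
  refine ⟨fun h => ?_, fun h => ENat.toNat_le_of_le_natCast h.chromaticNumber_le⟩
  have hne : G.chromaticNumber ≠ ⊤ :=
    chromaticNumber_ne_top_iff_exists.2 ⟨_, G.colorable_of_fintype⟩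
  rw [← chromaticNumber_le_iff_colorable, ← ENat.natCast_toNat hne]
  exact_mod_cast h

theorem chi_eq_two_iff [Fintype V] (G : SimpleGraph V) :
    chi G = 2 ↔ G.Colorable 2 ∧ G ≠ ⊥ := by
  rw [Ne, ← colorable_one_iff, ← chi_le_iff_colorable, ← chi_le_iff_colorable]
  omega

theorem chi_induce_eq_two {G : SimpleGraph V} {s : Set V} [Fintype s]
    (hs : (G.induce s).Colorable 2) {p q : V} (hp : p ∈ s) (hq : q ∈ s) (hpq : G.Adj p q) :
    chi (G.induce s) = 2 :=
  (chi_eq_two_iff _).2 ⟨hs, ne_bot_iff_exists_adj.2 ⟨⟨p, hp⟩, ⟨q, hq⟩, hpq⟩⟩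

theorem deg_eq_ncard_neighborSet [Fintype V] (G : SimpleGraph V) (v : V) :
    deg G v = (G.neighborSet v).ncard := by
  classical
  rw [deg, Set.ncard_eq_toFinset_card', ← card_neighborSet_eq_degree, Set.toFinset_card]

theorem deg_le_maxDeg [Fintype V] (G : SimpleGraph V) (v : V) : deg G v ≤ maxDeg G :=
  @degree_le_maxDegree V G _ (Classical.decRel _) v

variable [Fintype V] [DecidableEq V] {G : SimpleGraph V}

theorem vsChi_le_card {S : Finset V} (h : chi (G.induce (↑(Sᶜ) : Set V)) = chi G - 1) :
    vsChi G ≤ S.card :=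
  Nat.sInf_le ⟨S, rfl, h⟩

theorem ivsChi_le_card {S : Finset V} (hS : ∀ x ∈ S, ∀ y ∈ S, ¬ G.Adj x y)
    (h : chi (G.induce (↑(Sᶜ) : Set V)) = chi G - 1) : ivsChi G ≤ S.card :=
  Nat.sInf_le ⟨S, rfl, hS, h⟩

theorem exists_card_eq_vsChi (h : vsChi G ≠ 0) :
    ∃ S : Finset V, S.card = vsChi G ∧ chi (G.induce (↑(Sᶜ) : Set V)) = chi G - 1 := by
  refine Nat.sInf_mem (s := {n | ∃ S : Finset V, S.card = n ∧
    chi (G.induce (↑(Sᶜ) : Set V)) = chi G - 1}) (Set.nonempty_iff_ne_empty.2 fun hemp => h ?_)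
  rw [vsChi, hemp, Nat.sInf_empty]

end Invariants

section ChromaticNumberThree

variable {V : Type*} [Fintype V] [DecidableEq V] {G : SimpleGraph V} (hχ : chi G = 3)
include hχ

theorem chi_induce_compl_singleton_ne_two (hvs : vsChi G = 2) (v : V) :
    chi (G.induce (↑(({v} : Finset V)ᶜ) : Set V)) ≠ 2 := fun h => by
  have := vsChi_le_card (by rw [h, hχ])
  rw [hvs, Finset.card_singleton] at this
  omega

theorem adj_of_chi_induce_compl_pair (hivs : ivsChi G = 3) {x y : V}
    (h : chi (G.induce (↑(({x, y} : Finset V)ᶜ) : Set V)) = 2) : G.Adj x y := by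
  by_contra hxy
  have hind : ∀ a ∈ ({x, y} : Finset V), ∀ b ∈ ({x, y} : Finset V), ¬ G.Adj a b := by
    simp only [Finset.mem_insert, Finset.mem_singleton]
    rintro a (rfl | rfl) b (rfl | rfl) <;>
      first | exact G.irrefl | exact hxy | exact fun h => hxy h.symm
  have := (ivsChi_le_card hind (by rw [h, hχ])).trans Finset.card_le_two
  omega

theorem two_le_ncard_neighborSet_inter_compl_pair (hvs : vsChi G = 2) {a b : V} (hab : a ≠ b)
    (hch : chi (G.induce (↑(({a, b} : Finset V)ᶜ) : Set V)) = 2) :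
    2 ≤ (G.neighborSet a ∩ ↑(({a, b} : Finset V)ᶜ)).ncard := by
  by_contra! h
  obtain ⟨hcol, hne⟩ := (chi_eq_two_iff _).1 hch
  obtain ⟨⟨p, hp⟩, ⟨q, hq⟩, hpq⟩ := ne_bot_iff_exists_adj.1 hne
  have hsub : (↑(({a, b} : Finset V)ᶜ) : Set V) ⊆ ↑(({b} : Finset V)ᶜ) :=
    Finset.coe_subset.2 <| Finset.compl_subset_compl.2 <| by simp
  have heq : (↑(({b} : Finset V)ᶜ) : Set V) = insert a ↑(({a, b} : Finset V)ᶜ) := by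
    push_cast; ext; grind
  refine chi_induce_compl_singleton_ne_two hχ hvs b
    (chi_induce_eq_two ?_ (hsub hp) (hsub hq) hpq)
  rw [heq]
  exact hcol.induce_insert h

theorem adj_of_neighborSet_subset_triple (hivs : ivsChi G = 3) {a b u w : V}
    (hch : chi (G.induce (↑(({a, b} : Finset V)ᶜ) : Set V)) = 2)
    (hN : G.neighborSet a ⊆ {b, u, w}) (hab : G.Adj a b) (hau : G.Adj a u) (haw : G.Adj a w)
    (hwu : w ≠ u) (hwb : w ≠ b) : G.Adj u b := by
  have := hab.ne; have := hau.ne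
  refine adj_of_chi_induce_compl_pair hχ hivs (chi_induce_eq_two ?_
    (p := a) (q := w) (by push_cast; grind) (by push_cast; grind) haw)
  set T : Set V := ↑(({a, b, u} : Finset V)ᶜ)
  have hsub : T ⊆ ↑(({a, b} : Finset V)ᶜ) :=
    Finset.coe_subset.2 <| Finset.compl_subset_compl.2 <| by simp
  have heq : (↑(({u, b} : Finset V)ᶜ) : Set V) = insert a T := by
    push_cast [T]; ext; grind
  have hnbr : G.neighborSet a ∩ T ⊆ {w} := by
    rintro x ⟨hx, hx'⟩
    have := hN hx
    push_cast [T] at hx' ⊢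
    grind
  rw [heq]
  exact ((chi_eq_two_iff _).1 hch).1.induce_mono hsub |>.induce_insert <|
    (Set.ncard_le_ncard hnbr).trans_lt (by simp)

theorem adj_of_neighborSet_subset_triple_of_deg_le_four (hivs : ivsChi G = 3) {a b u w : V}
    (hch : chi (G.induce (↑(({a, b} : Finset V)ᶜ) : Set V)) = 2) (hb : deg G b ≤ 4)
    (hN : G.neighborSet a ⊆ {b, u, w}) (hab : G.Adj a b) (hau : G.Adj a u) (haw : G.Adj a w)
    (hub : G.Adj u b) (hwb : G.Adj w b) (huw : u ≠ w) : G.Adj u w := by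
  have := hab.ne; have := hau.ne; have := haw.ne; have := hub.ne; have := hwb.ne
  refine adj_of_chi_induce_compl_pair hχ hivs (chi_induce_eq_two ?_
    (p := a) (q := b) (by push_cast; grind) (by push_cast; grind) hab)
  set T : Set V := ↑(({a, b, u, w} : Finset V)ᶜ)
  have hsub : T ⊆ ↑(({a, b} : Finset V)ᶜ) :=
    Finset.coe_subset.2 <| Finset.compl_subset_compl.2 <| by simp
  have heq : (↑(({u, w} : Finset V)ᶜ) : Set V) = insert a (insert b T) := by
    push_cast [T]; ext; grind
  have hnbr_a : G.neighborSet a ∩ insert b T ⊆ {b} := by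
    rintro x ⟨hx, hx'⟩
    have := hN hx
    push_cast [T] at hx' ⊢
    grind
  have hnbr_b : (G.neighborSet b ∩ T).ncard < 2 := by
    have hdisj : Disjoint (G.neighborSet b ∩ T) {a, u, w} := by
      rw [Set.disjoint_left]
      rintro x ⟨-, hx⟩
      push_cast [T] at hx ⊢
      grind
    have hsub : G.neighborSet b ∩ T ∪ {a, u, w} ⊆ G.neighborSet b := by
      rintro x (⟨hx, -⟩ | rfl | rfl | rfl)
      exacts [hx, hab.symm, hub.symm, hwb.symm]
    have := Set.ncard_le_ncard hsub
    rw [Set.ncard_union_eq hdisj, Set.ncard_eq_three.2 ⟨a, u, w, hau.ne, haw.ne, huw, rfl⟩,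
      ← deg_eq_ncard_neighborSet] at this
    omega
  rw [heq]
  exact ((chi_eq_two_iff _).1 hch).1.induce_mono hsub |>.induce_insert hnbr_b |>.induce_insert <|
    (Set.ncard_le_ncard hnbr_a).trans_lt (by simp)

theorem four_le_deg_of_chi_induce_compl_pair (hivs : ivsChi G = 3) (hvs : vsChi G = 2)
    {a b : V} (hb : deg G b ≤ 4)
    (hch : chi (G.induce (↑(({a, b} : Finset V)ᶜ) : Set V)) = 2) : 4 ≤ deg G a := by
  have hab := adj_of_chi_induce_compl_pair hχ hivs hch
  by_contra! ha
  have hdiff : G.neighborSet a ∩ ↑(({a, b} : Finset V)ᶜ) = G.neighborSet a \ {b} := by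
    push_cast
    ext x
    have := fun h : G.Adj a x => h.ne
    grind [mem_neighborSet]
  have hcard : (G.neighborSet a \ {b}).ncard = 2 := by
    have := two_le_ncard_neighborSet_inter_compl_pair hχ hvs hab.ne hch
    rw [hdiff] at this
    rw [Set.ncard_sdiff_singleton_of_mem (show b ∈ G.neighborSet a from hab),
      ← deg_eq_ncard_neighborSet] at this ⊢
    omega
  obtain ⟨u, w, huw, huw_eq⟩ := Set.ncard_eq_two.1 hcard
  have hu : G.Adj a u ∧ u ≠ b := by simpa using huw_eq.symm.subset (Set.mem_insert u {w})
  have hw : G.Adj a w ∧ w ≠ b := by simpa using huw_eq.symm.subset (Set.mem_insert_of_mem u rfl)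
  have hN : G.neighborSet a ⊆ {b, u, w} := fun x hx => by
    by_cases hxb : x = b
    · exact Or.inl hxb
    · exact Or.inr (huw_eq.subset ⟨hx, hxb⟩)
  have hub := adj_of_neighborSet_subset_triple hχ hivs hch hN hab hu.1 hw.1 huw.symm hw.2
  have hwb := adj_of_neighborSet_subset_triple hχ hivs hch (hN.trans (by grind)) hab hw.1 hu.1
    huw hu.2
  have huw_adj := adj_of_neighborSet_subset_triple_of_deg_le_four hχ hivs hch hb hN hab hu.1 hw.1
    hub hwb huw
  refine ((chi_le_iff_colorable G 3).1 hχ.le).cliqueFree (by norm_num : 3 < 3 + 1) {a, b, u, w} ?_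
  exact (is3Clique_triple_iff.2 ⟨hub.symm, hwb.symm, huw_adj⟩).insert (by simp [hab, hu.1, hw.1])

end ChromaticNumberThree

/-- If `χ(G) = 3`, `ivs_χ(G) = 3`, `vs_χ(G) = 2` and `2χ(G) ≥ Δ(G) + 2`, then `Δ(G) = 4`
and every pair of vertices whose removal leaves a graph of chromatic number `2` consists of
vertices of degree `4`. -/
theorem stmt_6 {V : Type*} [Fintype V] [DecidableEq V] (G : SimpleGraph V)
    (h1 : chi G = 3) (h2 : ivsChi G = 3) (h3 : vsChi G = 2)
    (h4 : 2 * chi G ≥ maxDeg G + 2) :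
    maxDeg G = 4 ∧ ∀ v₁ v₂ : V,
      chi (G.induce (↑(({v₁, v₂} : Finset V)ᶜ) : Set V)) = 2 →
      deg G v₁ = 4 ∧ deg G v₂ = 4 := by
  have hΔ : ∀ v, deg G v ≤ 4 := fun v => by have := deg_le_maxDeg G v; omega
  have hpair : ∀ v₁ v₂ : V, chi (G.induce (↑(({v₁, v₂} : Finset V)ᶜ) : Set V)) = 2 →
      deg G v₁ = 4 ∧ deg G v₂ = 4 := fun v₁ v₂ h => by
    have h' : chi (G.induce (↑(({v₂, v₁} : Finset V)ᶜ) : Set V)) = 2 := by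
      rwa [Finset.pair_comm]
    exact ⟨le_antisymm (hΔ v₁) (four_le_deg_of_chi_induce_compl_pair h1 h2 h3 (hΔ v₂) h),
      le_antisymm (hΔ v₂) (four_le_deg_of_chi_induce_compl_pair h1 h2 h3 (hΔ v₁) h')⟩
  refine ⟨?_, hpair⟩
  obtain ⟨S, hS, hSχ⟩ := exists_card_eq_vsChi (h3 ▸ two_ne_zero)
  obtain ⟨a, b, -, rfl⟩ := Finset.card_eq_two.1 (hS.trans h3)
  have := (hpair a b (by rw [hSχ, h1])).1 ▸ deg_le_maxDeg G a
  omega
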